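/- Dropping auxiliary parameters from implicit definitions: assume Craig interpolation for Δ0 formulas holds (for classically valid entailments). If a Δ0 formula Σ(o_in, o_out, ā) implicitly defines o_out as a function of o_in (i.e., Σ(o_in,o_out,ā) ∧ Σ(o_in,o_out',ā') entails o_out = o_out'), then there exists a Δ0 formula Σ'(o_in, o_out) with no auxiliary variables such that Σ(o_in,o_out,ā) entails Σ'(o_in,o_out), and Σ' implicitly defines o_out as a function of o_in (Σ'(o_in,o_out) ∧ Σ'(o_in,o_out') entails o_out = o_out'). -/

import Mathlib

/-- Nested relational types. -/
inductive NType : Type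
  | U : NType
  | unit : NType
  | prod : NType → NType → NType
  | set : NType → NType

/-- Objects of a nested relational type over a set `α` of Ur-elements. -/
def Obj (α : Type) : NType → Type
  | .U => α
  | .unit => Unit
  | .prod a b => Obj α a × Obj α b
  | .set t => Set (Obj α t)

/-- Typed de Bruijn variables over a context of types. -/
inductive Var : List NType → NType → Type
  | zero {Γ t} : Var (t :: Γ) t
  | succ {Γ s t} : Var Γ t → Var (s :: Γ) t

/-- Environments: assignments of objects to all variables of a context. -/
def Env (α : Type) (Γ : List NType) : Type := ∀ t, Var Γ t → Obj α t

def Env.nil {α : Type} : Env α [] := fun _ v => nomatch v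

def Env.cons {α : Type} {Γ : List NType} {t : NType} (x : Obj α t) (ρ : Env α Γ) :
    Env α (t :: Γ) := fun s v =>
  match v with
  | .zero => x
  | .succ w => ρ s w

/-- Terms: variables, unit, tupling and projections. -/
inductive Tm : List NType → NType → Type
  | var {Γ t} : Var Γ t → Tm Γ t
  | unit {Γ} : Tm Γ .unit
  | pair {Γ a b} : Tm Γ a → Tm Γ b → Tm Γ (.prod a b)
  | fst {Γ a b} : Tm Γ (.prod a b) → Tm Γ a
  | snd {Γ a b} : Tm Γ (.prod a b) → Tm Γ b

def Tm.eval {α : Type} {Γ : List NType} (ρ : Env α Γ) : ∀ {t}, Tm Γ t → Obj α t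
  | _, .var v => ρ _ v
  | _, .unit => (() : Unit)
  | _, .pair a b => ((Tm.eval ρ a, Tm.eval ρ b) : _ × _)
  | _, .fst (a := a) (b := b) p => (Tm.eval ρ p : Obj α a × Obj α b).1
  | _, .snd (a := a) (b := b) p => (Tm.eval ρ p : Obj α a × Obj α b).2

/-- Δ₀ formulas: (dis)equality of Ur-elements, ⊤, ⊥, ∧, ∨ and bounded quantifiers. -/
inductive Delta0 : List NType → Type
  | eqU {Γ} : Tm Γ .U → Tm Γ .U → Delta0 Γ
  | neU {Γ} : Tm Γ .U → Tm Γ .U → Delta0 Γ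
  | tru {Γ} : Delta0 Γ
  | fls {Γ} : Delta0 Γ
  | and {Γ} : Delta0 Γ → Delta0 Γ → Delta0 Γ
  | or {Γ} : Delta0 Γ → Delta0 Γ → Delta0 Γ
  | all {Γ t} : Tm Γ (.set t) → Delta0 (t :: Γ) → Delta0 Γ
  | ex {Γ t} : Tm Γ (.set t) → Delta0 (t :: Γ) → Delta0 Γ

/-- Satisfaction of a Δ₀ formula in an environment. -/
def Delta0.sat {α : Type} : ∀ {Γ}, Env α Γ → Delta0 Γ → Prop
  | _, ρ, .eqU a b => Tm.eval ρ a = Tm.eval ρ b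
  | _, ρ, .neU a b => Tm.eval ρ a ≠ Tm.eval ρ b
  | _, _, .tru => True
  | _, _, .fls => False
  | _, ρ, .and φ ψ => Delta0.sat ρ φ ∧ Delta0.sat ρ ψ
  | _, ρ, .or φ ψ => Delta0.sat ρ φ ∨ Delta0.sat ρ ψ
  | _, ρ, .all (t := T) s φ =>
      ∀ x : Obj _ T, x ∈ (show Set (Obj _ T) from Tm.eval ρ s) → Delta0.sat (Env.cons x ρ) φ
  | _, ρ, .ex (t := T) s φ =>
      ∃ x : Obj _ T, x ∈ (show Set (Obj _ T) from Tm.eval ρ s) ∧ Delta0.sat (Env.cons x ρ) φ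

/-- Nested relational calculus expressions. -/
inductive NRC : List NType → NType → Type
  | var {Γ t} : Var Γ t → NRC Γ t
  | unit {Γ} : NRC Γ .unit
  | pair {Γ a b} : NRC Γ a → NRC Γ b → NRC Γ (.prod a b)
  | fst {Γ a b} : NRC Γ (.prod a b) → NRC Γ a
  | snd {Γ a b} : NRC Γ (.prod a b) → NRC Γ b
  | sing {Γ t} : NRC Γ t → NRC Γ (.set t)
  | empty {Γ t} : NRC Γ (.set t)
  | union {Γ t} : NRC Γ (.set t) → NRC Γ (.set t) → NRC Γ (.set t)
  | diff {Γ t} : NRC Γ (.set t) → NRC Γ (.set t) → NRC Γ (.set t)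
  | bigUnion {Γ a b} : NRC (a :: Γ) (.set b) → NRC Γ (.set a) → NRC Γ (.set b)

/-- Semantics of NRC expressions. -/
def NRC.eval {α : Type} : ∀ {Γ}, Env α Γ → ∀ {t}, NRC Γ t → Obj α t
  | _, ρ, _, .var v => ρ _ v
  | _, _, _, .unit => (() : Unit)
  | _, ρ, _, .pair a b => ((NRC.eval ρ a, NRC.eval ρ b) : _ × _)
  | _, ρ, _, .fst (a := a) (b := b) p => (NRC.eval ρ p : Obj α a × Obj α b).1
  | _, ρ, _, .snd (a := a) (b := b) p => (NRC.eval ρ p : Obj α a × Obj α b).2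
  | _, ρ, _, .sing e => ({NRC.eval ρ e} : Set _)
  | _, _, _, .empty => (∅ : Set _)
  | _, ρ, _, .union e1 e2 => ((NRC.eval ρ e1 : Set _) ∪ (NRC.eval ρ e2 : Set _) : Set _)
  | _, ρ, _, .diff e1 e2 => ((NRC.eval ρ e1 : Set _) \ (NRC.eval ρ e2 : Set _) : Set _)
  | _, ρ, _, .bigUnion (a := a) (b := b) e2 e1 =>
      show Set (Obj α b) from
        ⋃ x ∈ (show Set (Obj α a) from NRC.eval ρ e1),
          (show Set (Obj α b) from NRC.eval (Env.cons x ρ) e2)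

/-- The Boolean type `Set(Unit)`. -/
abbrev NType.bool : NType := .set .unit

def Tm.fv {Γ : List NType} : ∀ {t}, Tm Γ t → Set ((s : NType) × Var Γ s)
  | _, .var v => {⟨_, v⟩}
  | _, .unit => ∅
  | _, .pair a b => a.fv ∪ b.fv
  | _, .fst p => p.fv
  | _, .snd p => p.fv

/-- Remove the topmost (bound) variable from a set of variables. -/
def dropFv {Γ : List NType} {a : NType} (S : Set ((s : NType) × Var (a :: Γ) s)) :
    Set ((s : NType) × Var Γ s) :=
  {v | (⟨v.1, .succ v.2⟩ : (s : NType) × Var (a :: Γ) s) ∈ S}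

/-- Free variables of a Δ₀ formula. -/
def Delta0.fv : ∀ {Γ : List NType}, Delta0 Γ → Set ((s : NType) × Var Γ s)
  | _, .eqU a b => a.fv ∪ b.fv
  | _, .neU a b => a.fv ∪ b.fv
  | _, .tru => ∅
  | _, .fls => ∅
  | _, .and φ ψ => φ.fv ∪ ψ.fv
  | _, .or φ ψ => φ.fv ∪ ψ.fv
  | _, .all s φ => s.fv ∪ dropFv φ.fv
  | _, .ex s φ => s.fv ∪ dropFv φ.fv

/-!
Write `Σ(x, o, a)`. Functionality says that `Σ(x, o, a)` entails `Σ(x, o', a') → o = o'`, and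
the two sides share only `x` and `o`; an interpolant `θ(x, o)` therefore satisfies `Σ ⊨ θ` and
`θ(x, o) ∧ Σ(x, o', a') ⊨ o = o'`. So `Σ(x, o, a)` entails `θ(x, o') ∧ θ(x, o'') → o' = o''`,
whose interpolant `D(x)` shares only `x`. Then `Σ' := θ ∧ D` is entailed by `Σ`, and is
functional because `D(x)` already forces `θ(x, -)` to have at most one solution.
-/

namespace Env

variable {α : Type} {Γ Δ : List NType} {t : NType}

def head (ρ : Env α (t :: Γ)) : Obj α t := ρ t .zero

def tail (ρ : Env α (t :: Γ)) : Env α Γ := fun s v => ρ s (.succ v)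

theorem cons_head_tail (ρ : Env α (t :: Γ)) : cons ρ.head ρ.tail = ρ := by
  funext s v; cases v <;> rfl

@[simp] theorem cons_zero (x : Obj α t) (ρ : Env α Γ) : cons x ρ t .zero = x := rfl

@[simp] theorem cons_succ {s : NType} (x : Obj α t) (ρ : Env α Γ) (v : Var Γ s) :
    cons x ρ s (.succ v) = ρ s v := rfl

theorem eq_nil (ρ : Env α []) : ρ = nil := by
  funext s v; cases v

@[simp] theorem forall_cons {P : Env α (t :: Γ) → Prop} : (∀ ρ, P ρ) ↔ ∀ x ρ, P (cons x ρ) :=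
  ⟨fun h _ _ => h _, fun h ρ => cons_head_tail ρ ▸ h _ _⟩

@[simp] theorem forall_nil {P : Env α [] → Prop} : (∀ ρ, P ρ) ↔ P nil :=
  ⟨fun h => h _, fun h ρ => eq_nil ρ ▸ h⟩

def append : ∀ {Γ Δ : List NType}, Env α Γ → Env α Δ → Env α (Γ ++ Δ)
  | [], _, _, σ => σ
  | _ :: _, _, ρ, σ => cons ρ.head (append ρ.tail σ)

@[simp] theorem nil_append (σ : Env α Δ) : nil.append σ = σ := rfl

@[simp] theorem cons_append (x : Obj α t) (ρ : Env α Γ) (σ : Env α Δ) :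
    (cons x ρ).append σ = cons x (ρ.append σ) := rfl

theorem exists_eq_append : ∀ {Γ Δ : List NType} (τ : Env α (Γ ++ Δ)),
    ∃ (ρ : Env α Γ) (σ : Env α Δ), ρ.append σ = τ
  | [], _, τ => ⟨nil, τ, rfl⟩
  | _ :: _, _, τ => by
      obtain ⟨ρ, σ, h⟩ := exists_eq_append τ.tail
      exact ⟨cons τ.head ρ, σ, by rw [cons_append, h, cons_head_tail]⟩

end Env

def Ren (Γ Γ' : List NType) := ∀ t, Var Γ t → Var Γ' t

namespace Ren

variable {Γ Γ' Δ Δ' : List NType}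

def lift {a : NType} (f : Ren Γ Γ') : Ren (a :: Γ) (a :: Γ')
  | _, .zero => .zero
  | _, .succ v => .succ (f _ v)

def shift {a : NType} : Ren Γ (a :: Γ) := fun _ => .succ

def ofNil : Ren [] Γ := fun _ v => nomatch v

def appendLeft (Δ : List NType) : ∀ Γ : List NType, Ren Γ (Γ ++ Δ)
  | [] => ofNil
  | _ :: Γ => (appendLeft Δ Γ).lift

def appendRight (Δ : List NType) : ∀ Γ : List NType, Ren Δ (Γ ++ Δ)
  | [] => fun _ v => v
  | _ :: Γ => fun _ v => .succ (appendRight Δ Γ _ v)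

def liftAppend (f : Ren Δ Δ') : ∀ Γ : List NType, Ren (Γ ++ Δ) (Γ ++ Δ')
  | [] => f
  | _ :: Γ => (liftAppend f Γ).lift

def range (f : Ren Γ Γ') : Set ((s : NType) × Var Γ' s) := {p | ∃ v, f p.1 v = p.2}

theorem subset_range_lift_iff {a : NType} {f : Ren Γ Γ'}
    {S : Set ((s : NType) × Var (a :: Γ') s)} : S ⊆ f.lift.range ↔ dropFv S ⊆ f.range := by
  constructor
  · rintro h ⟨t, x⟩ hx
    obtain ⟨v, hv⟩ : ∃ v, f.lift t v = .succ x := h hx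
    cases v with
    | zero => cases hv
    | succ u => exact ⟨u, Var.succ.inj hv⟩
  · rintro h ⟨t, x⟩ hx
    cases x with
    | zero => exact ⟨.zero, rfl⟩
    | succ x =>
      obtain ⟨u, hu⟩ : ∃ u, f t u = x := h (show ⟨t, x⟩ ∈ dropFv S from hx)
      exact ⟨.succ u, congrArg Var.succ hu⟩

theorem range_lift_inter {a : NType} {Γ₁ Γ₂ Γ₀ : List NType} {f : Ren Γ₁ Γ'} {g : Ren Γ₂ Γ'}
    {h : Ren Γ₀ Γ'} (hfg : f.range ∩ g.range ⊆ h.range) :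
    (f.lift (a := a)).range ∩ g.lift.range ⊆ h.lift.range :=
  subset_range_lift_iff.mpr fun _ hp =>
    hfg ⟨subset_range_lift_iff.mp subset_rfl hp.1, subset_range_lift_iff.mp subset_rfl hp.2⟩

theorem appendLeft_ne_appendRight : ∀ {Δ₁ Δ₂ : List NType} {t : NType} (v : Var Δ₁ t)
    (w : Var Δ₂ t), appendLeft Δ₂ Δ₁ t v ≠ appendRight Δ₂ Δ₁ t w
  | _ :: _, _, _, .zero, _ => fun h => by cases h
  | _ :: _, _, _, .succ v, w => fun h => appendLeft_ne_appendRight v w (Var.succ.inj h)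

/-- In `Γ ++ Δ₁ ++ Δ₂`, only variables of `Γ` are seen both from `Γ ++ Δ₁` and from `Γ ++ Δ₂`. -/
theorem range_liftAppend_inter (Δ₁ Δ₂ : List NType) : ∀ Γ : List NType,
    ((appendLeft Δ₂ Δ₁).liftAppend Γ).range ∩ ((appendRight Δ₂ Δ₁).liftAppend Γ).range ⊆
      (appendLeft (Δ₁ ++ Δ₂) Γ).range
  | [] => by
      rintro ⟨t, x⟩ ⟨hv, hw⟩
      obtain ⟨v, rfl⟩ : ∃ v, appendLeft Δ₂ Δ₁ t v = x := hv
      obtain ⟨w, hw⟩ : ∃ w, appendRight Δ₂ Δ₁ t w = appendLeft Δ₂ Δ₁ t v := hw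
      exact absurd hw.symm (appendLeft_ne_appendRight v w)
  | _ :: Γ => range_lift_inter (range_liftAppend_inter Δ₁ Δ₂ Γ)

end Ren

def Tm.ren {Γ Γ' : List NType} (f : Ren Γ Γ') : ∀ {t}, Tm Γ t → Tm Γ' t
  | _, .var v => .var (f _ v)
  | _, .unit => .unit
  | _, .pair a b => .pair (a.ren f) (b.ren f)
  | _, .fst p => .fst (p.ren f)
  | _, .snd p => .snd (p.ren f)

def Delta0.ren {Γ Γ' : List NType} (f : Ren Γ Γ') : Delta0 Γ → Delta0 Γ'
  | .eqU a b => .eqU (a.ren f) (b.ren f)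
  | .neU a b => .neU (a.ren f) (b.ren f)
  | .tru => .tru
  | .fls => .fls
  | .and φ ψ => .and (φ.ren f) (ψ.ren f)
  | .or φ ψ => .or (φ.ren f) (ψ.ren f)
  | .all s φ => .all (s.ren f) (φ.ren f.lift)
  | .ex s φ => .ex (s.ren f) (φ.ren f.lift)

namespace Env

variable {α : Type} {Γ Γ' Δ Δ' : List NType}

def comp (ρ : Env α Γ') (f : Ren Γ Γ') : Env α Γ := fun t v => ρ t (f t v)

@[simp] theorem comp_lift {a : NType} (ρ : Env α Γ') (f : Ren Γ Γ') (x : Obj α a) :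
    (cons x ρ).comp f.lift = cons x (ρ.comp f) := by
  funext t v; cases v <;> rfl

@[simp] theorem cons_comp_shift {a : NType} (x : Obj α a) (ρ : Env α Γ) :
    (cons x ρ).comp Ren.shift = ρ := rfl

@[simp] theorem comp_of_nil (ρ : Env α Γ) (f : Ren [] Γ) : ρ.comp f = nil := eq_nil _

theorem comp_appendLeft : ∀ {Γ : List NType} (ρ : Env α Γ) (σ : Env α Δ),
    (ρ.append σ).comp (Ren.appendLeft Δ Γ) = ρ
  | [], ρ, _ => (eq_nil _).trans (eq_nil ρ).symm
  | _ :: _, ρ, σ => by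
      rw [← cons_head_tail ρ, cons_append]
      exact (comp_lift _ _ _).trans (congrArg _ (comp_appendLeft _ σ))

theorem comp_appendRight : ∀ {Γ : List NType} (ρ : Env α Γ) (σ : Env α Δ),
    (ρ.append σ).comp (Ren.appendRight Δ Γ) = σ
  | [], _, _ => rfl
  | _ :: _, ρ, σ => comp_appendRight ρ.tail σ

theorem comp_liftAppend (f : Ren Δ Δ') : ∀ {Γ : List NType} (ρ : Env α Γ) (σ : Env α Δ'),
    (ρ.append σ).comp (f.liftAppend Γ) = ρ.append (σ.comp f)
  | [], _, _ => rfl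
  | _ :: _, ρ, σ => (comp_lift _ _ _).trans (congrArg _ (comp_liftAppend f ρ.tail σ))

end Env

theorem Tm.eval_ren {α : Type} {Γ Γ' : List NType} (f : Ren Γ Γ') (ρ : Env α Γ') :
    ∀ {t} (a : Tm Γ t), (a.ren f).eval ρ = a.eval (ρ.comp f)
  | _, .var _ => rfl
  | _, .unit => rfl
  | _, .pair a b => by rw [Tm.ren, Tm.eval, Tm.eval, eval_ren f ρ a, eval_ren f ρ b]
  | _, .fst p => by rw [Tm.ren, Tm.eval, Tm.eval, eval_ren f ρ p]
  | _, .snd p => by rw [Tm.ren, Tm.eval, Tm.eval, eval_ren f ρ p]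

@[simp] theorem Delta0.sat_ren {α : Type} : ∀ {Γ Γ' : List NType} (f : Ren Γ Γ') (ρ : Env α Γ')
    (φ : Delta0 Γ), (φ.ren f).sat ρ ↔ φ.sat (ρ.comp f)
  | _, _, f, ρ, .eqU a b => by simp only [ren, sat, Tm.eval_ren]
  | _, _, f, ρ, .neU a b => by simp only [ren, sat, Tm.eval_ren]
  | _, _, _, _, .tru => Iff.rfl
  | _, _, _, _, .fls => Iff.rfl
  | _, _, f, ρ, .and φ ψ => by simp only [ren, sat, sat_ren f ρ φ, sat_ren f ρ ψ]
  | _, _, f, ρ, .or φ ψ => by simp only [ren, sat, sat_ren f ρ φ, sat_ren f ρ ψ]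
  | _, _, f, ρ, .all s φ => by
      simp only [ren, sat, Tm.eval_ren]
      exact forall₂_congr fun x _ => by rw [sat_ren, Env.comp_lift]
  | _, _, f, ρ, .ex s φ => by
      simp only [ren, sat, Tm.eval_ren]
      exact exists_congr fun x => and_congr_right' (by rw [sat_ren, Env.comp_lift])

theorem Tm.fv_ren_subset {Γ Γ' : List NType} (f : Ren Γ Γ') :
    ∀ {t} (a : Tm Γ t), (a.ren f).fv ⊆ f.range
  | _, .var v => by rintro _ rfl; exact ⟨v, rfl⟩
  | _, .unit => Set.empty_subset _
  | _, .pair a b => Set.union_subset (fv_ren_subset f a) (fv_ren_subset f b)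
  | _, .fst p => fv_ren_subset f p
  | _, .snd p => fv_ren_subset f p

theorem Delta0.fv_ren_subset : ∀ {Γ Γ' : List NType} (f : Ren Γ Γ') (φ : Delta0 Γ),
    (φ.ren f).fv ⊆ f.range
  | _, _, f, .eqU a b => Set.union_subset (a.fv_ren_subset f) (b.fv_ren_subset f)
  | _, _, f, .neU a b => Set.union_subset (a.fv_ren_subset f) (b.fv_ren_subset f)
  | _, _, _, .tru => Set.empty_subset _
  | _, _, _, .fls => Set.empty_subset _
  | _, _, f, .and φ ψ => Set.union_subset (fv_ren_subset f φ) (fv_ren_subset f ψ)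
  | _, _, f, .or φ ψ => Set.union_subset (fv_ren_subset f φ) (fv_ren_subset f ψ)
  | _, _, f, .all s φ => Set.union_subset (s.fv_ren_subset f)
      (Ren.subset_range_lift_iff.mp (fv_ren_subset f.lift φ))
  | _, _, f, .ex s φ => Set.union_subset (s.fv_ren_subset f)
      (Ren.subset_range_lift_iff.mp (fv_ren_subset f.lift φ))

theorem Tm.exists_ren_eq_of_fv_subset {Γ Γ' : List NType} {f : Ren Γ Γ'} :
    ∀ {t} (a : Tm Γ' t), a.fv ⊆ f.range → ∃ a₀ : Tm Γ t, a₀.ren f = a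
  | _, .var v, h => by
      obtain ⟨w, rfl⟩ : ∃ w, f _ w = v := h rfl
      exact ⟨.var w, rfl⟩
  | _, .unit, _ => ⟨.unit, rfl⟩
  | _, .pair a b, h => by
      obtain ⟨a₀, rfl⟩ := exists_ren_eq_of_fv_subset a (Set.union_subset_iff.mp h).1
      obtain ⟨b₀, rfl⟩ := exists_ren_eq_of_fv_subset b (Set.union_subset_iff.mp h).2
      exact ⟨.pair a₀ b₀, rfl⟩
  | _, .fst p, h => by
      obtain ⟨p₀, rfl⟩ := exists_ren_eq_of_fv_subset p h
      exact ⟨.fst p₀, rfl⟩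
  | _, .snd p, h => by
      obtain ⟨p₀, rfl⟩ := exists_ren_eq_of_fv_subset p h
      exact ⟨.snd p₀, rfl⟩

theorem Delta0.exists_ren_eq_of_fv_subset : ∀ {Γ Γ' : List NType} {f : Ren Γ Γ'}
    (φ : Delta0 Γ'), φ.fv ⊆ f.range → ∃ φ₀ : Delta0 Γ, φ₀.ren f = φ
  | _, _, _, .eqU a b, h => by
      obtain ⟨a₀, rfl⟩ := a.exists_ren_eq_of_fv_subset (Set.union_subset_iff.mp h).1
      obtain ⟨b₀, rfl⟩ := b.exists_ren_eq_of_fv_subset (Set.union_subset_iff.mp h).2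
      exact ⟨.eqU a₀ b₀, rfl⟩
  | _, _, _, .neU a b, h => by
      obtain ⟨a₀, rfl⟩ := a.exists_ren_eq_of_fv_subset (Set.union_subset_iff.mp h).1
      obtain ⟨b₀, rfl⟩ := b.exists_ren_eq_of_fv_subset (Set.union_subset_iff.mp h).2
      exact ⟨.neU a₀ b₀, rfl⟩
  | _, _, _, .tru, _ => ⟨.tru, rfl⟩
  | _, _, _, .fls, _ => ⟨.fls, rfl⟩
  | _, _, _, .and φ ψ, h => by
      obtain ⟨φ₀, rfl⟩ := exists_ren_eq_of_fv_subset φ (Set.union_subset_iff.mp h).1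
      obtain ⟨ψ₀, rfl⟩ := exists_ren_eq_of_fv_subset ψ (Set.union_subset_iff.mp h).2
      exact ⟨.and φ₀ ψ₀, rfl⟩
  | _, _, _, .or φ ψ, h => by
      obtain ⟨φ₀, rfl⟩ := exists_ren_eq_of_fv_subset φ (Set.union_subset_iff.mp h).1
      obtain ⟨ψ₀, rfl⟩ := exists_ren_eq_of_fv_subset ψ (Set.union_subset_iff.mp h).2
      exact ⟨.or φ₀ ψ₀, rfl⟩
  | _, _, _, .all s φ, h => by
      obtain ⟨s₀, rfl⟩ := s.exists_ren_eq_of_fv_subset (Set.union_subset_iff.mp h).1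
      obtain ⟨φ₀, rfl⟩ := exists_ren_eq_of_fv_subset φ
        (Ren.subset_range_lift_iff.mpr (Set.union_subset_iff.mp h).2)
      exact ⟨.all s₀ φ₀, rfl⟩
  | _, _, _, .ex s φ, h => by
      obtain ⟨s₀, rfl⟩ := s.exists_ren_eq_of_fv_subset (Set.union_subset_iff.mp h).1
      obtain ⟨φ₀, rfl⟩ := exists_ren_eq_of_fv_subset φ
        (Ren.subset_range_lift_iff.mpr (Set.union_subset_iff.mp h).2)
      exact ⟨.ex s₀ φ₀, rfl⟩

def Obj.map {α β : Type} (f : α → β) : ∀ {t : NType}, Obj α t → Obj β t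
  | .U, x => f x
  | .unit, _ => ()
  | .prod a b, x =>
      ((Obj.map f (x : Obj α a × Obj α b).1, Obj.map f (x : Obj α a × Obj α b).2) :
        Obj β a × Obj β b)
  | .set a, S => show Set (Obj β a) from Obj.map f '' (S : Set (Obj α a))

theorem Obj.map_injective {α β : Type} {f : α → β} (hf : Function.Injective f) :
    ∀ {t : NType}, Function.Injective (Obj.map f (t := t))
  | .U => hf
  | .unit => fun _ _ _ => Subsingleton.elim (α := Unit) _ _
  | .prod a b => fun _ _ h =>
      Prod.ext (map_injective hf (t := a) (congrArg Prod.fst h))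
        (map_injective hf (t := b) (congrArg Prod.snd h))
  | .set a => fun _ _ h => Set.image_injective.mpr (map_injective hf (t := a)) h

def Obj.default {α : Type} (a : α) : ∀ t : NType, Obj α t
  | .U => a
  | .unit => ()
  | .prod s t => ((Obj.default a s, Obj.default a t) : Obj α s × Obj α t)
  | .set s => (∅ : Set (Obj α s))

namespace Env

variable {α β : Type} {Γ Δ : List NType}

def map (f : α → β) (ρ : Env α Γ) : Env β Γ := fun t v => Obj.map f (ρ t v)

theorem map_cons {a : NType} (f : α → β) (x : Obj α a) (ρ : Env α Γ) :
    (cons x ρ).map f = cons (Obj.map f x) (ρ.map f) := by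
  funext t v; cases v <;> rfl

theorem map_append (f : α → β) : ∀ {Γ : List NType} (ρ : Env α Γ) (σ : Env α Δ),
    (ρ.append σ).map f = (ρ.map f).append (σ.map f)
  | [], _, _ => rfl
  | _ :: _, ρ, σ => (map_cons _ _ _).trans (congrArg _ (map_append f ρ.tail σ))

end Env

theorem Tm.eval_map {α β : Type} (f : α → β) {Γ : List NType} (ρ : Env α Γ) :
    ∀ {t} (a : Tm Γ t), a.eval (ρ.map f) = Obj.map f (a.eval ρ)
  | _, .var _ => rfl
  | _, .unit => rfl
  | _, .pair a b => by simp only [Tm.eval, eval_map f ρ a, eval_map f ρ b]; rfl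
  | _, .fst p => by simp only [Tm.eval, eval_map f ρ p]; rfl
  | _, .snd p => by simp only [Tm.eval, eval_map f ρ p]; rfl

theorem Delta0.sat_map {α β : Type} {f : α → β} (hf : Function.Injective f) :
    ∀ {Γ : List NType} (ρ : Env α Γ) (φ : Delta0 Γ), φ.sat (ρ.map f) ↔ φ.sat ρ
  | _, ρ, .eqU a b => by
      simp only [sat, Tm.eval_map]
      exact (Obj.map_injective hf).eq_iff
  | _, ρ, .neU a b => by
      simp only [sat, Tm.eval_map]
      exact (Obj.map_injective hf).ne_iff
  | _, _, .tru => Iff.rfl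
  | _, _, .fls => Iff.rfl
  | _, ρ, .and φ ψ => by simp only [sat, sat_map hf ρ φ, sat_map hf ρ ψ]
  | _, ρ, .or φ ψ => by simp only [sat, sat_map hf ρ φ, sat_map hf ρ ψ]
  | _, ρ, .all s φ => by
      simp only [sat, Tm.eval_map]
      refine ⟨fun h y hy => ?_, ?_⟩
      · rw [← sat_map hf, Env.map_cons]
        exact h _ ⟨y, hy, rfl⟩
      · rintro h _ ⟨y, hy, rfl⟩
        rw [← Env.map_cons, sat_map hf]
        exact h y hy
  | _, ρ, .ex s φ => by
      simp only [sat, Tm.eval_map]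
      refine ⟨?_, fun ⟨y, hy, hφ⟩ => ⟨_, ⟨y, hy, rfl⟩, ?_⟩⟩
      · rintro ⟨_, ⟨y, hy, rfl⟩, hφ⟩
        rw [← Env.map_cons, sat_map hf] at hφ
        exact ⟨y, hy, hφ⟩
      · rwa [← Env.map_cons, sat_map hf]

def Delta0.neg : ∀ {Γ : List NType}, Delta0 Γ → Delta0 Γ
  | _, .eqU a b => .neU a b
  | _, .neU a b => .eqU a b
  | _, .tru => .fls
  | _, .fls => .tru
  | _, .and φ ψ => .or φ.neg ψ.neg
  | _, .or φ ψ => .and φ.neg ψ.neg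
  | _, .all s φ => .ex s φ.neg
  | _, .ex s φ => .all s φ.neg

theorem Delta0.sat_neg {α : Type} : ∀ {Γ : List NType} (ρ : Env α Γ) (φ : Delta0 Γ),
    φ.neg.sat ρ ↔ ¬ φ.sat ρ
  | _, _, .eqU _ _ => Iff.rfl
  | _, _, .neU _ _ => not_not.symm
  | _, _, .tru => not_true.symm
  | _, _, .fls => not_false_iff.symm
  | _, ρ, .and φ ψ => by simp only [neg, sat, sat_neg ρ φ, sat_neg ρ ψ, not_and_or]
  | _, ρ, .or φ ψ => by simp only [neg, sat, sat_neg ρ φ, sat_neg ρ ψ, not_or]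
  | _, ρ, .all s φ => by
      simp only [neg, sat, not_forall, exists_prop]
      exact exists_congr fun x => and_congr_right' (sat_neg (Env.cons x ρ) φ)
  | _, ρ, .ex s φ => by
      simp only [neg, sat, not_exists, not_and]
      exact forall₂_congr fun x _ => sat_neg (Env.cons x ρ) φ

def Delta0.imp {Γ : List NType} (φ ψ : Delta0 Γ) : Delta0 Γ := .or φ.neg ψ

@[simp] theorem Delta0.sat_imp {α : Type} {Γ : List NType} (ρ : Env α Γ) (φ ψ : Delta0 Γ) :
    (φ.imp ψ).sat ρ ↔ (φ.sat ρ → ψ.sat ρ) := by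
  rw [imp, sat, sat_neg, imp_iff_not_or]

/-- Δ₀ has equality only at `U`; at other types it is built up, by extensionality at set types. -/
def Delta0.eqT : ∀ (t : NType) {Γ : List NType}, Tm Γ t → Tm Γ t → Delta0 Γ
  | .U, _, a, b => .eqU a b
  | .unit, _, _, _ => .tru
  | .prod s t, _, a, b => .and (eqT s (.fst a) (.fst b)) (eqT t (.snd a) (.snd b))
  | .set t, _, a, b =>
      .and (.all a (.ex (b.ren Ren.shift) (eqT t (.var (.succ .zero)) (.var .zero))))
        (.all b (.ex (a.ren Ren.shift) (eqT t (.var (.succ .zero)) (.var .zero))))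

@[simp] theorem Delta0.sat_eqT {α : Type} : ∀ (t : NType) {Γ : List NType} (ρ : Env α Γ)
    (a b : Tm Γ t), (eqT t a b).sat ρ ↔ a.eval ρ = b.eval ρ
  | .U, _, _, _, _ => Iff.rfl
  | .unit, _, _, _, _ => iff_of_true trivial (Subsingleton.elim (α := Unit) _ _)
  | .prod s t, _, ρ, a, b => by
      simp only [eqT, sat, sat_eqT s ρ, sat_eqT t ρ, Tm.eval]
      exact Prod.ext_iff.symm
  | .set t, _, ρ, a, b => by
      have subset : ∀ c d : Tm _ (.set t),
          (Delta0.all c (.ex (d.ren Ren.shift) (eqT t (.var (.succ .zero)) (.var .zero)))).sat ρ ↔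
            (show Set (Obj α t) from c.eval ρ) ⊆ (show Set (Obj α t) from d.eval ρ) := fun c d =>
        forall₂_congr fun x _ => by
          simp only [sat, sat_eqT t, Tm.eval_ren, Env.cons_comp_shift]
          exact ⟨fun ⟨y, hy, (hxy : x = y)⟩ => hxy ▸ hy, fun hx => ⟨x, hx, rfl⟩⟩
      rw [eqT, sat, subset, subset]
      exact Set.Subset.antisymm_iff.symm

def Delta0.Entails {Γ : List NType} (φ ψ : Delta0 Γ) : Prop :=
  ∀ (α : Type) (ρ : Env α Γ), φ.sat ρ → ψ.sat ρ

def CraigInterpolation : Prop :=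
  ∀ (Γ : List NType) (φ ψ : Delta0 Γ), φ.Entails ψ →
    ∃ θ : Delta0 Γ, θ.fv ⊆ φ.fv ∩ ψ.fv ∧ φ.Entails θ ∧ θ.Entails ψ

theorem CraigInterpolation.exists_interpolant_append (hcraig : CraigInterpolation)
    {Γ Δ₁ Δ₂ : List NType} (φ : Delta0 (Γ ++ Δ₁)) (ψ : Delta0 (Γ ++ Δ₂))
    (h : ∀ (α : Type) (ρ : Env α Γ) (σ₁ : Env α Δ₁) (σ₂ : Env α Δ₂),
      φ.sat (ρ.append σ₁) → ψ.sat (ρ.append σ₂)) :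
    ∃ θ : Delta0 Γ,
      (∀ (α : Type) (ρ : Env α Γ) (σ₁ : Env α Δ₁), φ.sat (ρ.append σ₁) → θ.sat ρ) ∧
      (∀ (α : Type) (ρ : Env α Γ) (σ₂ : Env α Δ₂), θ.sat ρ → ψ.sat (ρ.append σ₂)) := by
  set φ' := φ.ren ((Ren.appendLeft Δ₂ Δ₁).liftAppend Γ)
  set ψ' := ψ.ren ((Ren.appendRight Δ₂ Δ₁).liftAppend Γ)
  have sat_φ' : ∀ (α : Type) (ρ : Env α Γ) σ₁ (σ₂ : Env α Δ₂),
      φ'.sat (ρ.append (σ₁.append σ₂)) ↔ φ.sat (ρ.append σ₁) := fun _ _ _ _ => by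
    rw [Delta0.sat_ren, Env.comp_liftAppend, Env.comp_appendLeft]
  have sat_ψ' : ∀ (α : Type) (ρ : Env α Γ) (σ₁ : Env α Δ₁) σ₂,
      ψ'.sat (ρ.append (σ₁.append σ₂)) ↔ ψ.sat (ρ.append σ₂) := fun _ _ _ _ => by
    rw [Delta0.sat_ren, Env.comp_liftAppend, Env.comp_appendRight]
  obtain ⟨θ, hθfv, hφθ, hθψ⟩ := hcraig _ φ' ψ' fun α τ => by
    obtain ⟨ρ, τ', rfl⟩ := τ.exists_eq_append
    obtain ⟨σ₁, σ₂, rfl⟩ := τ'.exists_eq_append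
    rw [sat_φ', sat_ψ']
    exact h α ρ σ₁ σ₂
  obtain ⟨θ₀, rfl⟩ := θ.exists_ren_eq_of_fv_subset (f := Ren.appendLeft (Δ₁ ++ Δ₂) Γ) <|
    hθfv.trans <| (Set.inter_subset_inter (φ.fv_ren_subset _) (ψ.fv_ren_subset _)).trans
      (Ren.range_liftAppend_inter Δ₁ Δ₂ Γ)
  have sat_θ : ∀ (α : Type) (ρ : Env α Γ) τ,
      (θ₀.ren (Ren.appendLeft (Δ₁ ++ Δ₂) Γ)).sat (ρ.append τ) ↔ θ₀.sat ρ := fun _ _ _ => by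
    rw [Delta0.sat_ren, Env.comp_appendLeft]
  -- Over `Option α` every type is inhabited, which supplies values for the variables of the
  -- other side; `sat_map` transfers the result back to `α`.
  have sat_some : ∀ {α : Type} {Γ : List NType} (ρ : Env α Γ) (χ : Delta0 Γ),
      χ.sat (ρ.map some) ↔ χ.sat ρ := fun _ χ => Delta0.sat_map (Option.some_injective _) _ χ
  let pad : ∀ {α : Type} {Δ : List NType}, Env (Option α) Δ := fun t _ => Obj.default none t
  refine ⟨θ₀, fun α ρ σ₁ hφ => ?_, fun α ρ σ₂ hθ => ?_⟩
  · rw [← sat_some, ← sat_θ _ _ ((σ₁.map some).append pad)]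
    refine hφθ _ _ ((sat_φ' _ _ _ _).mpr ?_)
    rwa [← Env.map_append, sat_some]
  · have := hθψ _ _ ((sat_θ _ (ρ.map some) (pad.append (σ₂.map some))).mpr ((sat_some _ _).mpr hθ))
    rwa [sat_ψ', ← Env.map_append, sat_some] at this

theorem CraigInterpolation.exists_output_interpolant (hcraig : CraigInterpolation)
    {Tin T A : NType} (Sg : Delta0 [Tin, T, A])
    (hfun : ∀ (α : Type) x (o o' : Obj α T) (a a' : Obj α A),
      Sg.sat (Env.cons x (Env.cons o (Env.cons a Env.nil))) →
      Sg.sat (Env.cons x (Env.cons o' (Env.cons a' Env.nil))) → o = o') :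
    ∃ θ : Delta0 [Tin, T],
      (∀ (α : Type) x o (a : Obj α A), Sg.sat (Env.cons x (Env.cons o (Env.cons a Env.nil))) →
        θ.sat (Env.cons x (Env.cons o Env.nil))) ∧
      (∀ (α : Type) x (o o' : Obj α T) (a' : Obj α A), θ.sat (Env.cons x (Env.cons o Env.nil)) →
        Sg.sat (Env.cons x (Env.cons o' (Env.cons a' Env.nil))) → o = o') := by
  simpa [Delta0.sat, Tm.eval] using
    hcraig.exists_interpolant_append (Γ := [Tin, T]) (Δ₁ := [A]) (Δ₂ := [T, A]) Sg
      ((Sg.ren Ren.shift.lift).imp (.eqT T (.var (.succ .zero)) (.var (.succ (.succ .zero)))))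
      (by simpa [Delta0.sat, Tm.eval] using fun α x o a o' a' => hfun α x o o' a a')

theorem CraigInterpolation.exists_input_interpolant (hcraig : CraigInterpolation)
    {Tin T A : NType} (Sg : Delta0 [Tin, T, A]) (θ : Delta0 [Tin, T])
    (hθ : ∀ (α : Type) x (o o' : Obj α T) (a' : Obj α A), θ.sat (Env.cons x (Env.cons o Env.nil)) →
      Sg.sat (Env.cons x (Env.cons o' (Env.cons a' Env.nil))) → o = o') :
    ∃ D : Delta0 [Tin],
      (∀ (α : Type) x o (a : Obj α A), Sg.sat (Env.cons x (Env.cons o (Env.cons a Env.nil))) →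
        D.sat (Env.cons x Env.nil)) ∧
      (∀ (α : Type) x (o o' : Obj α T), D.sat (Env.cons x Env.nil) →
        θ.sat (Env.cons x (Env.cons o Env.nil)) → θ.sat (Env.cons x (Env.cons o' Env.nil)) →
        o = o') := by
  simpa [Delta0.sat, Tm.eval] using
    hcraig.exists_interpolant_append (Γ := [Tin]) (Δ₁ := [T, A]) (Δ₂ := [T, T]) Sg
      (((θ.ren Ren.ofNil.lift.lift).and (θ.ren Ren.shift.lift)).imp
        (.eqT T (.var (.succ .zero)) (.var (.succ (.succ .zero)))))
      (by simpa [Delta0.sat, Tm.eval] using fun α x o (a : Obj α A) o' o''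
        (h : Sg.sat (Env.cons x (Env.cons o (Env.cons a Env.nil)))) h' h'' =>
          (hθ α x o' o a h' h).trans (hθ α x o'' o a h'' h).symm)

/-- Dropping auxiliary parameters from implicit definitions: assuming
Craig interpolation for Δ₀ formulas (for classically valid entailments), if a Δ₀ formula
`Σ(o_in, o_out, a)` implicitly defines `o_out` as a function of `o_in`, then there is a
Δ₀ formula `Σ'(o_in, o_out)` with no auxiliary variable such that `Σ` entails `Σ'` and
`Σ'` implicitly defines `o_out` as a function of `o_in`. -/
theorem drop_auxiliary_parameters
    (interp : ∀ (Γ : List NType) (φ ψ : Delta0 Γ),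
      (∀ (α : Type) (ρ : Env α Γ), Delta0.sat ρ φ → Delta0.sat ρ ψ) →
      ∃ θ : Delta0 Γ, Delta0.fv θ ⊆ Delta0.fv φ ∩ Delta0.fv ψ ∧
        (∀ (α : Type) (ρ : Env α Γ), Delta0.sat ρ φ → Delta0.sat ρ θ) ∧
        (∀ (α : Type) (ρ : Env α Γ), Delta0.sat ρ θ → Delta0.sat ρ ψ))
    (Tin T A : NType) (Sg : Delta0 [Tin, T, A])
    (hfun : ∀ (α : Type) (oin : Obj α Tin) (o o' : Obj α T) (a a' : Obj α A),
      Delta0.sat (Env.cons oin (Env.cons o (Env.cons a Env.nil))) Sg →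
      Delta0.sat (Env.cons oin (Env.cons o' (Env.cons a' Env.nil))) Sg → o = o') :
    ∃ Sg' : Delta0 [Tin, T],
      (∀ (α : Type) (oin : Obj α Tin) (o : Obj α T) (a : Obj α A),
        Delta0.sat (Env.cons oin (Env.cons o (Env.cons a Env.nil))) Sg →
        Delta0.sat (Env.cons oin (Env.cons o Env.nil)) Sg') ∧
      (∀ (α : Type) (oin : Obj α Tin) (o o' : Obj α T),
        Delta0.sat (Env.cons oin (Env.cons o Env.nil)) Sg' →
        Delta0.sat (Env.cons oin (Env.cons o' Env.nil)) Sg' → o = o') := by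
  obtain ⟨θ, hSgθ, hθ⟩ := CraigInterpolation.exists_output_interpolant interp Sg hfun
  obtain ⟨D, hSgD, hD⟩ := CraigInterpolation.exists_input_interpolant interp Sg θ hθ
  refine ⟨θ.and (D.ren Ren.ofNil.lift), fun α x o a h => ⟨hSgθ α x o a h, ?_⟩,
    fun α x o o' h h' => ?_⟩
  · simpa using hSgD α x o a h
  · simp only [Delta0.sat, Delta0.sat_ren, Env.comp_lift, Env.comp_of_nil] at h h'
    exact hD α x o o' h.2 h.1 h'.1
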